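/- Test-density construction in the proof of Lemma 5.2. For the FA-1f model with two empty boundaries at density ρ∈(0,1) and integers K≥1 and N≥2K+2: inf{ 𝒟_N(√f) : f:Ω_N→[0,∞), ν(f)=1, ν( f·∏_{x=K+1}^{N−K} η_x )=1 } ≤ Σ_{K,K}. (Explicitly, if g attains Σ_{K,K} on Ω_{2K+2}, the density h(η)=ρ^{−(N−2K−2)} g(η_1,…,η_{K+1},η_{N−K},…,η_N) ∏_{j=K+2}^{N−K−1} η_j satisfies ν(h)=1, ν(h·∏_{x=K+1}^{N−K}η_x)=1 and 𝒟_N(√h)=𝒟_{2K+2}(√g).) -/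

import Mathlib

open Finset Filter

open scoped Classical

/-- A configuration on the box `{1,…,N}` (0-indexed by `Fin N`). -/
abbrev Config (N : ℕ) := Fin N → Bool

/-- Occupation variable `η_i ∈ {0,1}` as a real number. -/
noncomputable def occ {N : ℕ} (η : Config N) (i : Fin N) : ℝ := if η i then 1 else 0

/-- Bernoulli(ρ) product weight of a configuration. -/
noncomputable def bern (ρ : ℝ) {N : ℕ} (η : Config N) : ℝ :=
  ∏ i, (if η i then ρ else 1 - ρ)

/-- Expectation under the Bernoulli(ρ) product measure `ν`. -/
noncomputable def expect (ρ : ℝ) {N : ℕ} (f : Config N → ℝ) : ℝ :=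
  ∑ η : Config N, bern ρ η * f η

/-- The configuration `η^i`, obtained by flipping `η` at site `i`. -/
def flipAt {N : ℕ} (η : Config N) (i : Fin N) : Config N :=
  Function.update η i (!η i)

/-- Occupation at the 1-indexed position `k ∈ {0,…,N+1}`, with boundary value
`bl` at `k = 0` and `br` at `k = N+1` (and beyond). -/
noncomputable def occAt {N : ℕ} (η : Config N) (bl br : ℝ) (k : ℕ) : ℝ :=
  if hk : k = 0 then bl
  else if h : k ≤ N then (if η ⟨k - 1, by omega⟩ then 1 else 0) else br

/-- The three kinetically constrained models considered: East (empty right boundary),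
FA-1f with two empty boundaries, FA-1f with one empty (right) boundary. -/
inductive KCM | east | fa2 | fa1

/-- The kinetic constraint `r_i(η)` of each model, at the (0-indexed) site `i`. -/
noncomputable def constr (m : KCM) {N : ℕ} (η : Config N) (i : Fin N) : ℝ :=
  match m with
  | KCM.east => 1 - occAt η 0 0 (i.1 + 2)
  | KCM.fa2  => 1 - occAt η 0 0 i.1 * occAt η 0 0 (i.1 + 2)
  | KCM.fa1  => 1 - occAt η 1 0 i.1 * occAt η 1 0 (i.1 + 2)

/-- The jump rate `c_i(η) = r_i(η)·[η_i(1−ρ)+(1−η_i)ρ]`. -/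
noncomputable def crate (m : KCM) (ρ : ℝ) {N : ℕ} (η : Config N) (i : Fin N) : ℝ :=
  constr m η i * (if η i then 1 - ρ else ρ)

/-- The escape rate `𝓗(η) = Σ_i c_i(η)`. -/
noncomputable def escRate (m : KCM) (ρ : ℝ) {N : ℕ} (η : Config N) : ℝ :=
  ∑ i, crate m ρ η i

/-- The Dirichlet form `𝒟_N(g) = Σ_i ν(c_i(η)(g(η^i)−g(η))²)`. -/
noncomputable def dirichlet (m : KCM) (ρ : ℝ) {N : ℕ} (g : Config N → ℝ) : ℝ :=
  ∑ i, expect ρ (fun η => crate m ρ η i * (g (flipAt η i) - g η) ^ 2)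

/-- The rescaled cumulant generating function `φ^{(N)}(λ)`, via the
Donsker–Varadhan variational (principal eigenvalue) formula. -/
noncomputable def phi (m : KCM) (ρ : ℝ) (N : ℕ) (lam : ℝ) : ℝ :=
  sSup { x | ∃ f : Config N → ℝ, (∀ η, 0 ≤ f η) ∧ expect ρ f = 1 ∧
    x = (Real.exp lam - 1) * expect ρ (fun η => f η * escRate m ρ η)
        - Real.exp lam * dirichlet m ρ (fun η => Real.sqrt (f η)) }

/-- The mean instantaneous activity `𝔸 = ν(c_j)` at an interior site `j`:
`2ρ(1−ρ)²` for East and `2ρ(1−ρ)(1−ρ²)` for FA-1f. -/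
noncomputable def meanAct (m : KCM) (ρ : ℝ) : ℝ :=
  match m with
  | KCM.east => 2 * ρ * (1 - ρ) ^ 2
  | _ => 2 * ρ * (1 - ρ) * (1 - ρ ^ 2)

/-- The two-boundary interface energy `Σ_{L,L'}` for FA-1f with two empty
boundaries: the infimum of `𝒟_{L+L'+2}(√f)` over probability densities `f`
with `ν(f·η_{L+1}η_{L+2}) = 1`. -/
noncomputable def SigmaTwo (ρ : ℝ) (L L' : ℕ) : ℝ :=
  sInf { x | ∃ f : Config (L + L' + 2) → ℝ, (∀ η, 0 ≤ f η) ∧ expect ρ f = 1 ∧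
    expect ρ (fun η => f η * occ η ⟨L, by omega⟩ * occ η ⟨L + 1, by omega⟩) = 1 ∧
    x = dirichlet KCM.fa2 ρ (fun η => Real.sqrt (f η)) }

/-- The one-boundary interface energy `Σ_L`: the infimum of `𝒟_L(√f)`
over probability densities `f` with `ν(f·η_1) = 1`, for the model `m`. -/
noncomputable def SigmaOne (m : KCM) (ρ : ℝ) (L : ℕ) : ℝ :=
  sInf { x | ∃ f : Config L → ℝ, (∀ η, 0 ≤ f η) ∧ expect ρ f = 1 ∧
    expect ρ (fun η => f η * occAt η 0 0 1) = 1 ∧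
    x = dirichlet m ρ (fun η => Real.sqrt (f η)) }

/-!
Take a density `g` admissible for `Σ_{K,K}` on `2K+2` sites, insert a block of `m = N - 2K - 2`
sites between its sites `K+1` and `K+2`, and set `h = ρ^{-m} · g ⊗ 𝟙{block fully occupied}`.
Since `ν(g) = ν(g η_{K+1} η_{K+2}) = 1`, `g` vanishes unless `η_{K+1} = η_{K+2} = 1`. On the
support of `h` every block site then has two occupied neighbours, so its FA-1f rate vanishes,
while each old site sees the same constraint as before: where a neighbour changed, an occupied
block site replaced the occupied site `K+1` or `K+2`. Hence `h` is admissible on `N` sites and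
`𝒟_N(√h) = 𝒟_{2K+2}(√g)`.
-/

namespace BlockInsertion

lemma occAt_succ {N : ℕ} (η : Config N) (bl br : ℝ) (i : Fin N) :
    occAt η bl br (i.1 + 1) = occ η i := by
  simp [occAt, occ, i.2]

lemma occAt_of_lt {N : ℕ} (η : Config N) (bl br : ℝ) {k : ℕ} (hk : N < k) :
    occAt η bl br k = br := by
  simp [occAt, show k ≠ 0 by omega, show ¬ k ≤ N by omega]

lemma occAt_mem_Icc {N : ℕ} (η : Config N) {bl br : ℝ} (hbl : bl ∈ Set.Icc 0 1)
    (hbr : br ∈ Set.Icc 0 1) (k : ℕ) : occAt η bl br k ∈ Set.Icc 0 1 := by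
  unfold occAt
  split_ifs <;> simp_all

lemma occAt_flipAt_of_ne {N : ℕ} (η : Config N) (bl br : ℝ) (i : Fin N) {k : ℕ}
    (hk : k ≠ i.1 + 1) : occAt (flipAt η i) bl br k = occAt η bl br k := by
  rcases Nat.eq_zero_or_pos k with rfl | hk0
  · simp [occAt]
  by_cases hkN : k ≤ N
  · have hne : (⟨k - 1, by omega⟩ : Fin N) ≠ i := Fin.ne_of_val_ne (by simp only; omega)
    simp [occAt, hk0.ne', hkN, flipAt, Function.update_of_ne hne]
  · simp [occAt, hkN]

lemma constr_flipAt_self (m : KCM) {N : ℕ} (η : Config N) (i : Fin N) :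
    constr m (flipAt η i) i = constr m η i := by
  cases m <;> simp (disch := omega) only [constr, occAt_flipAt_of_ne]

lemma constr_nonneg (m : KCM) {N : ℕ} (η : Config N) (i : Fin N) : 0 ≤ constr m η i := by
  have h01 : (0 : ℝ) ∈ Set.Icc 0 1 := by simp
  have h11 : (1 : ℝ) ∈ Set.Icc 0 1 := by simp
  cases m <;> simp only [constr, sub_nonneg]
  · exact (occAt_mem_Icc η h01 h01 _).2
  · exact mul_le_one₀ (occAt_mem_Icc η h01 h01 _).2 (occAt_mem_Icc η h01 h01 _).1
      (occAt_mem_Icc η h01 h01 _).2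
  · exact mul_le_one₀ (occAt_mem_Icc η h11 h01 _).2 (occAt_mem_Icc η h11 h01 _).1
      (occAt_mem_Icc η h11 h01 _).2

lemma bern_nonneg {ρ : ℝ} (hρ0 : 0 ≤ ρ) (hρ1 : ρ ≤ 1) {N : ℕ} (η : Config N) :
    0 ≤ bern ρ η :=
  Finset.prod_nonneg fun i _ => by split_ifs <;> linarith

lemma bern_pos {ρ : ℝ} (hρ0 : 0 < ρ) (hρ1 : ρ < 1) {N : ℕ} (η : Config N) : 0 < bern ρ η :=
  Finset.prod_pos fun i _ => by split_ifs <;> linarith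

lemma bern_ones (ρ : ℝ) (m : ℕ) : bern ρ (fun _ : Fin m => true) = ρ ^ m := by
  simp [bern]

lemma dirichlet_nonneg (m : KCM) {ρ : ℝ} (hρ0 : 0 ≤ ρ) (hρ1 : ρ ≤ 1) {N : ℕ}
    (g : Config N → ℝ) : 0 ≤ dirichlet m ρ g := by
  refine Finset.sum_nonneg fun i _ => Finset.sum_nonneg fun η _ => ?_
  have hrate : 0 ≤ crate m ρ η i :=
    mul_nonneg (constr_nonneg m η i) (by split_ifs <;> linarith)
  have := bern_nonneg hρ0 hρ1 η
  positivity

lemma eq_zero_of_expect_eq_zero {ρ : ℝ} (hρ0 : 0 < ρ) (hρ1 : ρ < 1) {N : ℕ}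
    {g : Config N → ℝ} (hg : ∀ η, 0 ≤ g η) (h : expect ρ g = 0) (η : Config N) : g η = 0 := by
  have hterm := (Finset.sum_eq_zero_iff_of_nonneg fun η _ =>
    mul_nonneg (bern_pos hρ0 hρ1 η).le (hg η)).1 h η (Finset.mem_univ η)
  exact (mul_eq_zero.1 hterm).resolve_left (bern_pos hρ0 hρ1 η).ne'

section Glue

variable {n m N : ℕ} (e : Fin n ⊕ Fin m ≃ Fin N)

def glueEquiv : Config n × Config m ≃ Config N :=
  (Equiv.sumArrowEquivProdArrow _ _ _).symm.trans (e.arrowCongr (Equiv.refl Bool))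

def glue (ζ : Config n) (ξ : Config m) : Config N := glueEquiv e (ζ, ξ)

@[simp]
lemma glue_apply (ζ : Config n) (ξ : Config m) (s : Fin n ⊕ Fin m) :
    glue e ζ ξ (e s) = Sum.elim ζ ξ s := by
  simp [glue, glueEquiv, Equiv.sumArrowEquivProdArrow]

@[simp]
lemma occ_glue (ζ : Config n) (ξ : Config m) (s : Fin n ⊕ Fin m) :
    occ (glue e ζ ξ) (e s) = Sum.elim (occ ζ) (occ ξ) s := by
  rcases s with i | j <;> simp [occ]

lemma sum_eq_sum_glue {M : Type*} [AddCommMonoid M] (F : Config N → M) :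
    ∑ η, F η = ∑ ζ, ∑ ξ, F (glue e ζ ξ) := by
  rw [← (glueEquiv e).sum_comp, Fintype.sum_prod_type]
  rfl

lemma bern_glue (ρ : ℝ) (ζ : Config n) (ξ : Config m) :
    bern ρ (glue e ζ ξ) = bern ρ ζ * bern ρ ξ := by
  rw [bern, ← e.prod_comp, Fintype.prod_sum_type]
  simp [bern]

lemma flipAt_glue_inl (ζ : Config n) (ξ : Config m) (i : Fin n) :
    flipAt (glue e ζ ξ) (e (.inl i)) = glue e (flipAt ζ i) ξ := by
  ext x
  obtain ⟨s | j', rfl⟩ := e.surjective x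
  · by_cases h : s = i
    · subst h; simp [flipAt]
    · simp [flipAt, Function.update_of_ne h,
        Function.update_of_ne (e.injective.ne (Sum.inl_injective.ne h))]
  · simp [flipAt]

lemma flipAt_glue_inr (ζ : Config n) (ξ : Config m) (j : Fin m) :
    flipAt (glue e ζ ξ) (e (.inr j)) = glue e ζ (flipAt ξ j) := by
  ext x
  obtain ⟨i' | s, rfl⟩ := e.surjective x
  · simp [flipAt]
  · by_cases h : s = j
    · subst h; simp [flipAt]
    · simp [flipAt, Function.update_of_ne h,
        Function.update_of_ne (e.injective.ne (Sum.inr_injective.ne h))]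

lemma expect_eq_of_glue {ρ : ℝ} (hρ : ρ ≠ 0) {g : Config N → ℝ} {G : Config n → ℝ}
    (hg : ∀ ζ ξ, g (glue e ζ ξ) = if ξ = (fun _ => true) then (ρ ^ m)⁻¹ * G ζ else 0) :
    expect ρ g = expect ρ G := by
  simp only [_root_.expect, sum_eq_sum_glue e, bern_glue, hg, mul_ite, mul_zero,
    Fintype.sum_ite_eq', bern_ones]
  refine Finset.sum_congr rfl fun _ _ => ?_
  field_simp

noncomputable def extendByOnes (ρ : ℝ) (f : Config n → ℝ) (η : Config N) : ℝ :=
  if ((glueEquiv e).symm η).2 = (fun _ => true) then (ρ ^ m)⁻¹ * f ((glueEquiv e).symm η).1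
  else 0

variable {ρ : ℝ} {f : Config n → ℝ}

lemma extendByOnes_glue (ζ : Config n) (ξ : Config m) :
    extendByOnes e ρ f (glue e ζ ξ) = if ξ = (fun _ => true) then (ρ ^ m)⁻¹ * f ζ else 0 := by
  simp [extendByOnes, glue]

lemma extendByOnes_nonneg (hρ : 0 ≤ ρ) (hf : ∀ ζ, 0 ≤ f ζ) (η : Config N) :
    0 ≤ extendByOnes e ρ f η := by
  unfold extendByOnes
  split_ifs
  exacts [mul_nonneg (by positivity) (hf _), le_rfl]

lemma expect_extendByOnes (hρ : ρ ≠ 0) : expect ρ (extendByOnes e ρ f) = expect ρ f :=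
  expect_eq_of_glue e hρ (extendByOnes_glue e)

lemma sqrt_extendByOnes_glue (hρ : 0 ≤ ρ) (ζ : Config n) (ξ : Config m) :
    √(extendByOnes e ρ f (glue e ζ ξ)) =
      if ξ = (fun _ => true) then √((ρ ^ m)⁻¹) * √(f ζ) else 0 := by
  rw [extendByOnes_glue]
  split_ifs
  exacts [Real.sqrt_mul (by positivity) _, Real.sqrt_zero]

end Glue

section Insertion

variable {L L' m : ℕ}

def insertPos (L L' m : ℕ) : Fin (L + L' + 2) ⊕ Fin m → Fin (L + L' + 2 + m)
  | .inl i => if i.1 ≤ L then ⟨i, by omega⟩ else ⟨i + m, by omega⟩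
  | .inr j => ⟨L + 1 + j, by omega⟩

lemma insertPos_bijective : (insertPos L L' m).Bijective := by
  refine (Fintype.bijective_iff_injective_and_card _).2 ⟨?_, by simp⟩
  rintro (i | j) (i' | j') h <;> simp only [insertPos] at h <;> (try split_ifs at h) <;>
    simp [Fin.ext_iff] at h ⊢ <;> omega

noncomputable def insertEquiv (L L' m : ℕ) : Fin (L + L' + 2) ⊕ Fin m ≃ Fin (L + L' + 2 + m) :=
  Equiv.ofBijective _ insertPos_bijective

local notation "ι" => insertEquiv L L' m

lemma insertEquiv_inl_val (i : Fin (L + L' + 2)) :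
    (ι (.inl i)).1 = if i.1 ≤ L then i.1 else i.1 + m := by
  simp only [insertEquiv, Equiv.ofBijective_apply, insertPos]
  split_ifs <;> rfl

lemma insertEquiv_inr_val (j : Fin m) : (ι (.inr j)).1 = L + 1 + j.1 := rfl

def PairOccupied (ζ : Config (L + L' + 2)) : Prop :=
  ζ ⟨L, by omega⟩ = true ∧ ζ ⟨L + 1, by omega⟩ = true

lemma pairOccupied_of_expect {ρ : ℝ} (hρ0 : 0 < ρ) (hρ1 : ρ < 1) {f : Config (L + L' + 2) → ℝ}
    (hf0 : ∀ ζ, 0 ≤ f ζ) (hf1 : expect ρ f = 1)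
    (hf2 : expect ρ (fun ζ => f ζ * occ ζ ⟨L, by omega⟩ * occ ζ ⟨L + 1, by omega⟩) = 1)
    (ζ : Config (L + L' + 2)) (hζ : f ζ ≠ 0) : PairOccupied ζ := by
  have hvanish := eq_zero_of_expect_eq_zero hρ0 hρ1
    (g := fun ζ => f ζ * (1 - occ ζ ⟨L, by omega⟩ * occ ζ ⟨L + 1, by omega⟩))
    (fun ζ => mul_nonneg (hf0 ζ) (by unfold occ; split_ifs <;> norm_num))
    (by
      simp only [_root_.expect] at hf1 hf2 ⊢
      have hsplit : ∑ ζ, bern ρ ζ * (f ζ * (1 - occ ζ ⟨L, by omega⟩ * occ ζ ⟨L + 1, by omega⟩)) =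
          ∑ ζ, bern ρ ζ * f ζ -
            ∑ ζ, bern ρ ζ * (f ζ * occ ζ ⟨L, by omega⟩ * occ ζ ⟨L + 1, by omega⟩) := by
        rw [← Finset.sum_sub_distrib]
        exact Finset.sum_congr rfl fun _ _ => by ring
      rw [hsplit, hf1, hf2, sub_self])
    ζ
  have hprod : occ ζ ⟨L, by omega⟩ * occ ζ ⟨L + 1, by omega⟩ = 1 := by
    linarith [(mul_eq_zero.1 hvanish).resolve_left hζ]
  refine ⟨?_, ?_⟩ <;> by_contra h <;> simp [occ, h] at hprod

section

variable (ζ : Config (L + L' + 2)) (ξ : Config m)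

local notation "η" => glue ι ζ ξ

lemma occAt_glue_left {k : ℕ} (hk : k ≤ L + 1) : occAt η 0 0 k = occAt ζ 0 0 k := by
  obtain rfl | ⟨i, rfl⟩ : k = 0 ∨ ∃ i, k = i + 1 := by rcases k with _ | i <;> simp
  · simp [occAt]
  · have hi : (ι (.inl ⟨i, by omega⟩)).1 = i := by
      simp [insertEquiv_inl_val, show i ≤ L by omega]
    have := occAt_succ η 0 0 (ι (.inl ⟨i, by omega⟩))
    rw [hi, occ_glue] at this
    rw [this]
    exact (occAt_succ ζ 0 0 ⟨i, by omega⟩).symm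

lemma occAt_glue_right {k : ℕ} (hk : L + 2 ≤ k) : occAt η 0 0 (k + m) = occAt ζ 0 0 k := by
  by_cases hkn : k ≤ L + L' + 2
  · obtain ⟨i, rfl⟩ : ∃ i, k = i + 1 := ⟨k - 1, by omega⟩
    have hi : (ι (.inl ⟨i, by omega⟩)).1 + 1 = i + 1 + m := by
      simp [insertEquiv_inl_val, show ¬ i ≤ L by omega]; omega
    have := occAt_succ η 0 0 (ι (.inl ⟨i, by omega⟩))
    rw [hi, occ_glue] at this
    rw [this]
    exact (occAt_succ ζ 0 0 ⟨i, by omega⟩).symm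
  · rw [occAt_of_lt _ _ _ (by omega), occAt_of_lt _ _ _ (by omega)]

lemma occAt_glue_block (j : Fin m) : occAt η 0 0 (L + 2 + j) = occ ξ j := by
  have := occAt_succ η 0 0 (ι (.inr j))
  rw [show L + 2 + j.1 = L + 1 + j.1 + 1 by omega]
  rwa [insertEquiv_inr_val, occ_glue, Sum.elim_inr] at this

lemma constr_glue_inl (hζ : PairOccupied ζ) (hξ : ∀ j, ξ j = true) (i : Fin (L + L' + 2)) :
    constr KCM.fa2 η (ι (.inl i)) = constr KCM.fa2 ζ i := by
  have hL : occAt ζ 0 0 (L + 1) = 1 := by simpa [occ, hζ.1] using occAt_succ ζ 0 0 ⟨L, by omega⟩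
  have hR : occAt ζ 0 0 (L + 2) = 1 := by
    simpa [occ, hζ.2] using occAt_succ ζ 0 0 ⟨L + 1, by omega⟩
  have hblock (j : Fin m) : occAt η 0 0 (L + 2 + j) = 1 := by simp [occAt_glue_block, occ, hξ]
  have hblockL : occAt η 0 0 (L + 1 + m) = occAt ζ 0 0 (L + 1) := by
    rcases Nat.eq_zero_or_pos m with rfl | hm
    · exact occAt_glue_left ζ ξ le_rfl
    · rw [hL, show L + 1 + m = L + 2 + (⟨m - 1, by omega⟩ : Fin m).1 by simp; omega, hblock]
  have hblockR : occAt η 0 0 (L + 2) = occAt ζ 0 0 (L + 2) := by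
    rcases Nat.eq_zero_or_pos m with rfl | hm
    · exact occAt_glue_right ζ ξ le_rfl
    · rw [hR, show L + 2 = L + 2 + (⟨0, hm⟩ : Fin m).1 from rfl, hblock]
  simp only [constr, insertEquiv_inl_val]
  split_ifs with hi
  · rw [occAt_glue_left ζ ξ (by omega : i.1 ≤ L + 1)]
    rcases (by omega : i.1 + 2 ≤ L + 1 ∨ i.1 = L) with h | h
    · rw [occAt_glue_left ζ ξ h]
    · rw [h, hblockR]
  · rw [show i.1 + m + 2 = i.1 + 2 + m by ring, occAt_glue_right ζ ξ (by omega : L + 2 ≤ i.1 + 2)]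
    rcases (by omega : L + 2 ≤ i.1 ∨ i.1 = L + 1) with h | h
    · rw [occAt_glue_right ζ ξ h]
    · rw [h, hblockL]

lemma constr_glue_inr_eq_zero (hζ : PairOccupied ζ) (j : Fin m) (hξ : ∀ j' ≠ j, ξ j' = true) :
    constr KCM.fa2 η (ι (.inr j)) = 0 := by
  have hblock (j' : Fin m) (h : j'.1 ≠ j.1) : occAt η 0 0 (L + 2 + j') = 1 := by
    simp [occAt_glue_block, occ, hξ j' (Fin.ne_of_val_ne h)]
  have hleft : occAt η 0 0 (L + 1 + j) = 1 := by
    rcases Nat.eq_zero_or_pos j.1 with h | h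
    · rw [h, add_zero, occAt_glue_left ζ ξ le_rfl]
      simpa [occ, hζ.1] using occAt_succ ζ 0 0 ⟨L, by omega⟩
    · rw [show L + 1 + j.1 = L + 2 + (⟨j.1 - 1, by omega⟩ : Fin m).1 by simp; omega,
        hblock _ (by simp; omega)]
  have hright : occAt η 0 0 (L + 1 + j + 2) = 1 := by
    rcases (by omega : j.1 + 1 = m ∨ j.1 + 1 < m) with h | h
    · rw [show L + 1 + j.1 + 2 = L + 2 + m by omega, occAt_glue_right ζ ξ le_rfl]
      simpa [occ, hζ.2] using occAt_succ ζ 0 0 ⟨L + 1, by omega⟩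
    · rw [show L + 1 + j.1 + 2 = L + 2 + (⟨j.1 + 1, h⟩ : Fin m).1 by simp; omega,
        hblock _ (by simp)]
  simp only [constr, insertEquiv_inr_val, hleft, hright]
  norm_num

lemma prod_occ_glue_ones :
    ∏ x ∈ univ.filter (fun x : Fin (L + L' + 2 + m) => L ≤ x.1 ∧ x.1 < L + L' + 2 + m - L'),
      occ (glue ι ζ (fun _ => true)) x =
      occ ζ ⟨L, by omega⟩ * occ ζ ⟨L + 1, by omega⟩ := by
  have hones (j : Fin m) : occ (fun _ => true) j = 1 := by simp [occ]
  rw [Finset.prod_filter, ← Equiv.prod_comp ι, Fintype.prod_sum_type]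
  simp only [occ_glue, Sum.elim_inl, Sum.elim_inr, hones, ite_self, Finset.prod_const_one, mul_one]
  rw [← Finset.prod_filter]
  have hpair : univ.filter (fun i : Fin (L + L' + 2) => L ≤ (ι (.inl i)).1 ∧
      (ι (.inl i)).1 < L + L' + 2 + m - L') = {⟨L, by omega⟩, ⟨L + 1, by omega⟩} := by
    ext i
    simp only [Finset.mem_filter, Finset.mem_univ, true_and, insertEquiv_inl_val,
      Finset.mem_insert, Finset.mem_singleton, Fin.ext_iff]
    split_ifs <;> omega
  rw [hpair, Finset.prod_pair (by simp [Fin.ext_iff])]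

lemma crate_glue_inl (ρ : ℝ) (i : Fin (L + L' + 2))
    (hζ : PairOccupied ζ ∨ PairOccupied (flipAt ζ i)) (hξ : ∀ j, ξ j = true) :
    crate KCM.fa2 ρ η (ι (.inl i)) = crate KCM.fa2 ρ ζ i := by
  have hconstr : constr KCM.fa2 η (ι (.inl i)) = constr KCM.fa2 ζ i := by
    rcases hζ with hζ | hζ
    · exact constr_glue_inl ζ ξ hζ hξ i
    -- the constraint at a site ignores the site itself, so we may flip `ζ` at `i` first
    · rw [← constr_flipAt_self, flipAt_glue_inl, constr_glue_inl _ ξ hζ hξ, constr_flipAt_self]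
  simp [crate, hconstr]

end

variable {ρ : ℝ} {f : Config (L + L' + 2) → ℝ}

lemma expect_extendByOnes_mul_prod (hρ : ρ ≠ 0) :
    expect ρ (fun η => extendByOnes ι ρ f η *
      ∏ x ∈ univ.filter (fun x : Fin (L + L' + 2 + m) => L ≤ x.1 ∧ x.1 < L + L' + 2 + m - L'),
        occ η x) =
      expect ρ (fun ζ => f ζ * occ ζ ⟨L, by omega⟩ * occ ζ ⟨L + 1, by omega⟩) :=
  expect_eq_of_glue _ hρ fun ζ ξ => by
    rw [extendByOnes_glue]
    split_ifs with hξ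
    · subst hξ
      rw [prod_occ_glue_ones]
      ring
    · rw [zero_mul]

lemma dirichlet_sqrt_extendByOnes (hρ : 0 < ρ) (hf : ∀ ζ, f ζ ≠ 0 → PairOccupied ζ) :
    dirichlet KCM.fa2 ρ (fun η => √(extendByOnes ι ρ f η)) =
      dirichlet KCM.fa2 ρ (fun ζ => √(f ζ)) := by
  have hblock (j : Fin m) : expect ρ (fun η => crate KCM.fa2 ρ η (ι (.inr j)) *
      (√(extendByOnes ι ρ f (flipAt η (ι (.inr j)))) - √(extendByOnes ι ρ f η)) ^ 2) = 0 := by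
    rw [expect_eq_of_glue ι hρ.ne' (G := fun _ => 0) fun ζ ξ => ?_]
    · simp [_root_.expect]
    rw [flipAt_glue_inr, sqrt_extendByOnes_glue ι hρ.le, sqrt_extendByOnes_glue ι hρ.le]
    by_cases hfζ : f ζ = 0
    · simp [hfζ]
    by_cases hξ : ∀ j' ≠ j, ξ j' = true
    · simp [crate, constr_glue_inr_eq_zero ζ ξ (hf ζ hfζ) j hξ]
    have h1 : ξ ≠ fun _ => true := fun h => hξ fun j' _ => by simp [h]
    have h2 : flipAt ξ j ≠ fun _ => true := fun h => hξ fun j' hj' => by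
      simpa [flipAt, Function.update_of_ne hj'] using congrFun h j'
    simp [h1, h2]
  have hsite (i : Fin (L + L' + 2)) : expect ρ (fun η => crate KCM.fa2 ρ η (ι (.inl i)) *
      (√(extendByOnes ι ρ f (flipAt η (ι (.inl i)))) - √(extendByOnes ι ρ f η)) ^ 2) =
      expect ρ (fun ζ => crate KCM.fa2 ρ ζ i * (√(f (flipAt ζ i)) - √(f ζ)) ^ 2) := by
    refine expect_eq_of_glue ι hρ.ne' fun ζ ξ => ?_
    rw [flipAt_glue_inl, sqrt_extendByOnes_glue ι hρ.le, sqrt_extendByOnes_glue ι hρ.le]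
    split_ifs with hξ
    · subst hξ
      by_cases hD : √(f (flipAt ζ i)) - √(f ζ) = 0
      · rw [← mul_sub, hD]
        simp
      have hocc : PairOccupied ζ ∨ PairOccupied (flipAt ζ i) := by
        by_contra! h
        have h1 : f ζ = 0 := by_contra fun h' => h.1 (hf _ h')
        have h2 : f (flipAt ζ i) = 0 := by_contra fun h' => h.2 (hf _ h')
        simp [h1, h2] at hD
      rw [crate_glue_inl ζ _ ρ i hocc fun _ => rfl, ← mul_sub, mul_pow,
        Real.sq_sqrt (by positivity)]
      ring
    · simp
  simp only [dirichlet]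
  rw [← Equiv.sum_comp ι, Fintype.sum_sum_type, Finset.sum_eq_zero fun j _ => hblock j, add_zero]
  exact Finset.sum_congr rfl fun i _ => hsite i

end Insertion

lemma sigmaTwo_set_nonempty {ρ : ℝ} (hρ : 0 < ρ) (L L' : ℕ) :
    {x | ∃ f : Config (L + L' + 2) → ℝ, (∀ η, 0 ≤ f η) ∧ expect ρ f = 1 ∧
      expect ρ (fun η => f η * occ η ⟨L, by omega⟩ * occ η ⟨L + 1, by omega⟩) = 1 ∧
      x = dirichlet KCM.fa2 ρ (fun η => √(f η))}.Nonempty := by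
  set f : Config (L + L' + 2) → ℝ :=
    fun η => if η = (fun _ => true) then (ρ ^ (L + L' + 2))⁻¹ else 0
  have hf1 : expect ρ f = 1 := by simp [f, _root_.expect, mul_ite, bern_ones, hρ.ne']
  have hocc : (fun η => f η * occ η ⟨L, by omega⟩ * occ η ⟨L + 1, by omega⟩) = f := by
    funext η
    by_cases h : η = fun _ => true <;> simp [f, h, occ]
  exact ⟨_, f, fun η => by positivity, hf1, by rw [hocc, hf1], rfl⟩

end BlockInsertion

open BlockInsertion in
theorem test_density_construction_general (ρ : ℝ) (hρ0 : 0 < ρ) (hρ1 : ρ < 1)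
    (K N : ℕ) (hN : 2 * K + 2 ≤ N) :
    sInf { x | ∃ f : Config N → ℝ, (∀ η, 0 ≤ f η) ∧ expect ρ f = 1 ∧
        expect ρ (fun η => f η *
          ∏ i ∈ Finset.univ.filter (fun x : Fin N => K ≤ x.1 ∧ x.1 < N - K), occ η i) = 1 ∧
        x = dirichlet KCM.fa2 ρ (fun η => Real.sqrt (f η)) }
      ≤ SigmaTwo ρ K K := by
  obtain ⟨m, rfl⟩ : ∃ m, N = K + K + 2 + m := ⟨N - (K + K + 2), by omega⟩
  refine csInf_le_csInf ⟨0, ?_⟩ (sigmaTwo_set_nonempty hρ0 K K) ?_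
  · rintro _ ⟨f, -, -, -, rfl⟩
    exact dirichlet_nonneg _ hρ0.le hρ1.le _
  · rintro _ ⟨f, hf0, hf1, hf2, rfl⟩
    exact ⟨extendByOnes (insertEquiv K K m) ρ f, extendByOnes_nonneg _ hρ0.le hf0,
      (expect_extendByOnes _ hρ0.ne').trans hf1, (expect_extendByOnes_mul_prod hρ0.ne').trans hf2,
      (dirichlet_sqrt_extendByOnes hρ0 (pairOccupied_of_expect hρ0 hρ1 hf0 hf1 hf2)).symm⟩

/-- **Test-density construction in the proof of Lemma 5.2.** For FA-1f with two
empty boundaries at density `ρ ∈ (0,1)`, `K ≥ 1` and `N ≥ 2K+2`: the infimum of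
`𝒟_N(√f)` over probability densities `f` with `ν(f·∏_{x=K+1}^{N−K} η_x) = 1` is
at most `Σ_{K,K}`. -/
theorem test_density_construction (ρ : ℝ) (hρ0 : 0 < ρ) (hρ1 : ρ < 1)
    (K N : ℕ) (hK : 1 ≤ K) (hN : 2 * K + 2 ≤ N) :
    sInf { x | ∃ f : Config N → ℝ, (∀ η, 0 ≤ f η) ∧ expect ρ f = 1 ∧
        expect ρ (fun η => f η *
          ∏ i ∈ Finset.univ.filter (fun x : Fin N => K ≤ x.1 ∧ x.1 < N - K), occ η i) = 1 ∧
        x = dirichlet KCM.fa2 ρ (fun η => Real.sqrt (f η)) }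
      ≤ SigmaTwo ρ K K :=
  test_density_construction_general ρ hρ0 hρ1 K N hN
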